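/- Let π, ρ ∈ NCL(n) be such that π̂ = ρ̂ and π̌ = ρ̌. Then π = ρ. -/

import Mathlib

open scoped Classical

/-- The minimum of a finset of naturals (`0` if empty). -/
noncomputable def fmin (A : Finset ℕ) : ℕ := sInf (A : Set ℕ)

/-- The maximum of a finset of naturals (`0` if empty). -/
noncomputable def fmax (A : Finset ℕ) : ℕ := sSup (A : Set ℕ)

/-- `α` is a partition of the finite set `F ⊆ ℕ`. -/
def IsPartitionOfSet (F : Finset ℕ) (α : Finset (Finset ℕ)) : Prop :=
  (∀ V ∈ α, V.Nonempty) ∧ (∀ V ∈ α, V ⊆ F) ∧ (∀ m ∈ F, ∃ V ∈ α, m ∈ V) ∧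
    ∀ V ∈ α, ∀ W ∈ α, V ≠ W → V ∩ W = ∅

/-- `α` is a partition of `{1,…,n}`. -/
def IsPartitionOf (n : ℕ) (α : Finset (Finset ℕ)) : Prop :=
  IsPartitionOfSet (Finset.Icc 1 n) α

/-- Two distinct blocks of the family `π` cross: there are `a < b < c < d` with
`a, c` in one block and `b, d` in a different block. -/
def IsCrossing (π : Finset (Finset ℕ)) : Prop :=
  ∃ A ∈ π, ∃ B ∈ π, A ≠ B ∧
    ∃ a ∈ A, ∃ b ∈ B, ∃ c ∈ A, ∃ d ∈ B, a < b ∧ b < c ∧ c < d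

/-- `α ∈ NC(n)`: a non-crossing partition of `{1,…,n}`. -/
def IsNCPartition (n : ℕ) (α : Finset (Finset ℕ)) : Prop :=
  IsPartitionOf n α ∧ ¬ IsCrossing α

/-- Reverse refinement order `α ≤ β`: every block of `α` is contained in a block of `β`
(equivalently, every block of `β` is a union of blocks of `α`). -/
def Refines (α β : Finset (Finset ℕ)) : Prop := ∀ V ∈ α, ∃ W ∈ β, V ⊆ W

/-- The partial order `α ≪ β`: `α ≤ β` and for every block `W` of `β` there is a block
`V` of `α` containing both `min W` and `max W`. -/
def LL (α β : Finset (Finset ℕ)) : Prop :=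
  Refines α β ∧ ∀ W ∈ β, ∃ V ∈ α, fmin W ∈ V ∧ fmax W ∈ V

/-- A block `V` (of `α`) is `β`-special: some block `W` of `β` has the same min and max. -/
def SpecialBlock (β : Finset (Finset ℕ)) (V : Finset ℕ) : Prop :=
  ∃ W ∈ β, fmin V = fmin W ∧ fmax V = fmax W

/-- `V` is an outer block of `α`: no block of `α` strictly nests around it. -/
def OuterBlock (α : Finset (Finset ℕ)) (V : Finset ℕ) : Prop :=
  ∀ V' ∈ α, ¬ (fmin V' < fmin V ∧ fmax V < fmax V')

/-- `π` is a linked partition of the finite set `F ⊆ ℕ`. -/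
def IsLinkedPartitionOfSet (F : Finset ℕ) (π : Finset (Finset ℕ)) : Prop :=
  (∀ A ∈ π, A.Nonempty) ∧ (∀ A ∈ π, A ⊆ F) ∧ (∀ m ∈ F, ∃ A ∈ π, m ∈ A) ∧
    ∀ A ∈ π, ∀ B ∈ π, A ≠ B →
      A ∩ B = ∅ ∨
        (2 ≤ A.card ∧ 2 ≤ B.card ∧ (A ∩ B).card = 1 ∧ fmin A ≠ fmin B ∧
          ∀ x ∈ A ∩ B, x = fmin A ∨ x = fmin B)

/-- `π ∈ NCL(F)`: a non-crossing linked partition of the finite set `F`. -/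
def IsNCLOfSet (F : Finset ℕ) (π : Finset (Finset ℕ)) : Prop :=
  IsLinkedPartitionOfSet F π ∧ ¬ IsCrossing π

/-- `π ∈ NCL(n)`: a non-crossing linked partition of `{1,…,n}`. -/
def IsNCL (n : ℕ) (π : Finset (Finset ℕ)) : Prop :=
  IsNCLOfSet (Finset.Icc 1 n) π

/-- The number of blocks of `π` containing `m`. -/
noncomputable def coverCount (π : Finset (Finset ℕ)) (m : ℕ) : ℕ :=
  (π.filter fun A => m ∈ A).card

/-- `m` is singly-covered by `π`: it lies in exactly one block. -/
def SinglyCovered (π : Finset (Finset ℕ)) (m : ℕ) : Prop := coverCount π m = 1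

/-- `m` is doubly-covered by `π`: it lies in exactly two blocks. -/
def DoublyCovered (π : Finset (Finset ℕ)) (m : ℕ) : Prop := coverCount π m = 2

/-- The partition `π̂` generated by the blocks of `π`: its blocks are the connected
components of the ground set under the relation of lying in a common block of `π`. -/
noncomputable def genPart (π : Finset (Finset ℕ)) : Finset (Finset ℕ) :=
  (π.sup id).image fun m =>
    (π.sup id).filter fun x =>
      Relation.EqvGen (fun a b => ∃ A ∈ π, a ∈ A ∧ b ∈ A) m x

/-- The unlinking `π̌` of a linked partition `π`. -/
noncomputable def unlink (π : Finset (Finset ℕ)) : Finset (Finset ℕ) :=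
  π.image fun A => if SinglyCovered π (fmin A) then A else A.erase (fmin A)

/-- The block of `α` containing `m` (empty if there is none). -/
noncomputable def blockOf (α : Finset (Finset ℕ)) (m : ℕ) : Finset ℕ :=
  (α.filter fun V => m ∈ V).sup id

/-- The successor of `m` in the cycle on the block `V` (elements in increasing order). -/
noncomputable def nextInBlock (V : Finset ℕ) (m : ℕ) : ℕ :=
  if m = fmax V then fmin V else fmin (V.filter fun x => m < x)

/-- The predecessor of `m` in the cycle on the block `V`. -/
noncomputable def prevInBlock (V : Finset ℕ) (m : ℕ) : ℕ :=
  if m = fmin V then fmax V else fmax (V.filter fun x => x < m)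

/-- The permutation `P_α` associated to a partition `α`, as a function: each block
`{i₁ < i₂ < ⋯ < iₘ}` becomes the cycle `i₁ ↦ i₂ ↦ ⋯ ↦ iₘ ↦ i₁`. -/
noncomputable def permOf (α : Finset (Finset ℕ)) (m : ℕ) : ℕ :=
  if m ∈ blockOf α m then nextInBlock (blockOf α m) m else m

/-- The inverse permutation `P_α⁻¹`, as a function. -/
noncomputable def permOfInv (α : Finset (Finset ℕ)) (m : ℕ) : ℕ :=
  if m ∈ blockOf α m then prevInBlock (blockOf α m) m else m

/-- The action `τ·α` of a map `τ` on a partition `α = {V₁,…,V_p}`, giving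
`{τ(V₁),…,τ(V_p)}`. -/
def mapPart (τ : ℕ → ℕ) (α : Finset (Finset ℕ)) : Finset (Finset ℕ) :=
  α.image fun V => V.image τ

/-- The cycled unlinking `π° := P_{π̂}⁻¹ · π̌`. -/
noncomputable def cycUnlink (π : Finset (Finset ℕ)) : Finset (Finset ℕ) :=
  mapPart (permOfInv (genPart π)) (unlink π)

/-- `NC(n)` as a finset. -/
noncomputable def NCF (n : ℕ) : Finset (Finset (Finset ℕ)) :=
  ((Finset.Icc 1 n).powerset.powerset).filter (IsNCPartition n)

/-- `NCL(n)` as a finset. -/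
noncomputable def NCLF (n : ℕ) : Finset (Finset (Finset ℕ)) :=
  ((Finset.Icc 1 n).powerset.powerset).filter (IsNCL n)

/-- The restriction `π|_E`: the blocks of `π` contained in `E`. -/
def restrictL (π : Finset (Finset ℕ)) (E : Finset ℕ) : Finset (Finset ℕ) :=
  π.filter fun A => A ⊆ E

/-- The partition `β₀` obtained from `β` by leaving blocks of size `≤ 2` intact and
breaking each block `W` with `|W| ≥ 3` into the doubleton `{min W, max W}` together
with `|W| - 2` singletons. -/
noncomputable def breakBlocks (β : Finset (Finset ℕ)) : Finset (Finset ℕ) :=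
  β.biUnion fun W =>
    if W.card ≤ 2 then {W}
    else insert {fmin W, fmax W} ((W \ {fmin W, fmax W}).image fun x => ({x} : Finset ℕ))

/-!
If the minimum `m` of a block `A` of `π` is singly-covered, `A` is a block of `π̌` and `m` is the
minimum of its `π̂`-block. Otherwise `A \ {m}` is a block of `π̌` whose minimum `t` is not the
minimum of its `π̂`-block, and `m` is the largest element of that `π̂`-block below `t`. So `π` is
recovered block by block from `π̌` and `π̂`. Both facts hold because a connected component of `π`
cannot enter a union of blocks it does not start in; by non-crossing, `(m, t)` is such a union, and
so is the set of `x ≥ m` such that no block has one element below `m` and another in `[m, x]`.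
-/

open Finset

namespace LinkedPartition

section FminFmax

variable {A : Finset ℕ} {x : ℕ}

lemma fmin_mem (h : A.Nonempty) : fmin A ∈ A := by
  exact_mod_cast Nat.sInf_mem (s := (A : Set ℕ)) (by exact_mod_cast h)

lemma fmin_le (h : x ∈ A) : fmin A ≤ x :=
  Nat.sInf_le (by exact_mod_cast h)

lemma fmax_mem (h : A.Nonempty) : fmax A ∈ A := by
  exact_mod_cast Nat.sSup_mem (s := (A : Set ℕ)) (by exact_mod_cast h) A.bddAbove

lemma le_fmax (h : x ∈ A) : x ≤ fmax A :=
  le_csSup A.bddAbove (by exact_mod_cast h)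

lemma fmin_eq_of_forall_le (hx : x ∈ A) (h : ∀ y ∈ A, x ≤ y) : fmin A = x :=
  le_antisymm (fmin_le hx) (h _ (fmin_mem ⟨x, hx⟩))

lemma fmax_eq_of_forall_le (hx : x ∈ A) (h : ∀ y ∈ A, y ≤ x) : fmax A = x :=
  le_antisymm (h _ (fmax_mem ⟨x, hx⟩)) (le_fmax hx)

end FminFmax

variable {F : Finset ℕ} {π : Finset (Finset ℕ)} {A : Finset ℕ}

lemma eq_fmin_of_mem_of_mem (hL : IsLinkedPartitionOfSet F π) {B : Finset ℕ} (hA : A ∈ π)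
    (hB : B ∈ π) (hne : A ≠ B) {x : ℕ} (hxA : x ∈ A) (hxB : x ∈ B) :
    (x = fmin A ∧ fmin B < x) ∨ (x = fmin B ∧ fmin A < x) := by
  have hx : x ∈ A ∩ B := mem_inter.2 ⟨hxA, hxB⟩
  rcases hL.2.2.2 A hA B hB hne with h | ⟨-, -, -, hmin, hlink⟩
  · simp [h] at hx
  · have := fmin_le hxA
    have := fmin_le hxB
    rcases hlink x hx with rfl | rfl <;> omega

lemma eq_of_singlyCovered {m : ℕ} (hs : SinglyCovered π m) {E : Finset ℕ} (hA : A ∈ π)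
    (hE : E ∈ π) (hmA : m ∈ A) (hmE : m ∈ E) : A = E :=
  card_le_one.1 hs.le A (mem_filter.2 ⟨hA, hmA⟩) E (mem_filter.2 ⟨hE, hmE⟩)

lemma two_le_card_of_not_singlyCovered (hL : IsLinkedPartitionOfSet F π) (hA : A ∈ π) {m : ℕ}
    (hmA : m ∈ A) (hns : ¬ SinglyCovered π m) : 2 ≤ A.card := by
  obtain ⟨E, hE, hEA, hmE⟩ : ∃ E ∈ π, E ≠ A ∧ m ∈ E := by
    by_contra! h
    refine hns (card_eq_one.2 ⟨A, eq_singleton_iff_unique_mem.2 ⟨mem_filter.2 ⟨hA, hmA⟩, ?_⟩⟩)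
    intro E hE
    by_contra hEA
    exact h E (mem_filter.1 hE).1 hEA (mem_filter.1 hE).2
  rcases hL.2.2.2 A hA E hE hEA.symm with h | ⟨h2, -⟩
  · simpa [h] using mem_inter.2 ⟨hmA, hmE⟩
  · exact h2

def SameBlock (π : Finset (Finset ℕ)) (a b : ℕ) : Prop := ∃ A ∈ π, a ∈ A ∧ b ∈ A

def BlockClosed (π : Finset (Finset ℕ)) (I : Set ℕ) : Prop :=
  ∀ C ∈ π, ∀ y ∈ C, y ∈ I → ∀ z ∈ C, z ∈ I

lemma BlockClosed.mem_iff_of_eqvGen {I : Set ℕ} (hI : BlockClosed π I) {a b : ℕ}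
    (h : Relation.EqvGen (SameBlock π) a b) : a ∈ I ↔ b ∈ I := by
  have hequiv : Equivalence fun a b : ℕ => (a ∈ I ↔ b ∈ I) :=
    ⟨fun _ => Iff.rfl, Iff.symm, Iff.trans⟩
  refine hequiv.eqvGen_iff.1 (Relation.EqvGen.mono ?_ a b h)
  rintro x y ⟨C, hC, hx, hy⟩
  exact ⟨fun hxI => hI C hC x hx hxI y hy, fun hyI => hI C hC y hy hyI x hx⟩

lemma blockClosed_Ioo_fmin (hπ : IsNCLOfSet F π) (hA : A ∈ π) {t : ℕ} (ht : t ∈ A)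
    (hgap : ∀ a ∈ A, a ∉ Set.Ioo (fmin A) t) : BlockClosed π (Set.Ioo (fmin A) t) := by
  intro C hC y hyC hy z hzC
  have hm : fmin A ∈ A := fmin_mem ⟨t, ht⟩
  have hCA : C ≠ A := by rintro rfl; exact hgap y hyC hy
  obtain ⟨hmy, hyt⟩ := hy
  have hbound : ∀ w ∈ C, fmin A ≤ w ∧ w ≤ t := fun w hw => by
    constructor <;> by_contra! hlt
    · exact hπ.2 ⟨C, hC, A, hA, hCA, w, hw, _, hm, y, hyC, t, ht, hlt, hmy, hyt⟩
    · exact hπ.2 ⟨A, hA, C, hC, hCA.symm, _, hm, y, hyC, t, ht, w, hw, hmy, hyt, hlt⟩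
  have hfC := hbound _ (fmin_mem ⟨y, hyC⟩)
  have hfy := fmin_le hyC
  obtain ⟨hmz, hzt⟩ := hbound z hzC
  refine ⟨lt_of_le_of_ne hmz fun hzm => ?_, lt_of_le_of_ne hzt fun hzt => ?_⟩
  · rcases eq_fmin_of_mem_of_mem hπ.1 hC hA hCA (hzm ▸ hzC) hm with h | h <;> omega
  · rcases eq_fmin_of_mem_of_mem hπ.1 hC hA hCA (hzt ▸ hzC) ht with h | h <;> omega

def unspannedFrom (π : Finset (Finset ℕ)) (m : ℕ) : Set ℕ :=
  {x | m ≤ x ∧ ∀ E ∈ π, ∀ q ∈ E, ∀ p ∈ E, q < m → m ≤ p → x < p}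

lemma blockClosed_unspannedFrom (hπ : IsNCLOfSet F π) (m : ℕ) :
    BlockClosed π (unspannedFrom π m) := by
  rintro C hC y hyC ⟨hmy, hy⟩ z hzC
  have hCunsp : ∀ q ∈ C, m ≤ q := fun q hq => by
    by_contra! hqm
    exact lt_irrefl y (hy C hC q hq y hyC hqm hmy)
  refine ⟨hCunsp z hzC, fun E hE q hq p hp hqm hmp => ?_⟩
  by_contra! hpz
  have hyp := hy E hE q hq p hp hqm hmp
  have hEC : E ≠ C := by rintro rfl; exact absurd (hCunsp q hq) (by omega)
  rcases hpz.lt_or_eq with hpz | rfl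
  · exact hπ.2 ⟨E, hE, C, hC, hEC, q, hq, y, hyC, p, hp, z, hzC, by omega, hyp, hpz⟩
  · have := fmin_le hq
    have := fmin_le hyC
    rcases eq_fmin_of_mem_of_mem hπ.1 hE hC hEC hp hzC with h | h <;> omega

lemma fmin_le_of_eqvGen (hπ : IsNCLOfSet F π) (hA : A ∈ π) (hs : SinglyCovered π (fmin A))
    {x : ℕ} (h : Relation.EqvGen (SameBlock π) (fmin A) x) : fmin A ≤ x := by
  have hm : fmin A ∈ unspannedFrom π (fmin A) := by
    refine ⟨le_rfl, fun E hE q hq p hp hqm hmp => ?_⟩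
    by_contra! hpm
    obtain rfl : p = fmin A := le_antisymm hpm hmp
    obtain rfl := eq_of_singlyCovered hs hA hE (fmin_mem (hπ.1.1 A hA)) hp
    exact absurd (fmin_le hq) (by omega)
  exact (((blockClosed_unspannedFrom hπ _).mem_iff_of_eqvGen h).1 hm).1

lemma notMem_Ioo_of_eqvGen (hπ : IsNCLOfSet F π) (hA : A ∈ π) {t : ℕ} (ht : t ∈ A)
    (hgap : ∀ a ∈ A, a ∉ Set.Ioo (fmin A) t) {x : ℕ}
    (h : Relation.EqvGen (SameBlock π) (fmin A) x) : x ∉ Set.Ioo (fmin A) t := fun hx =>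
  lt_irrefl _ (((blockClosed_Ioo_fmin hπ hA ht hgap).mem_iff_of_eqvGen h).2 hx).1

lemma mem_sup_of_mem (hA : A ∈ π) {x : ℕ} (hx : x ∈ A) : x ∈ π.sup id :=
  le_sup (f := id) hA hx

lemma mem_blockOf_genPart {y : ℕ} (hy : y ∈ π.sup id) {x : ℕ} :
    x ∈ blockOf (genPart π) y ↔ x ∈ π.sup id ∧ Relation.EqvGen (SameBlock π) y x := by
  have hequiv := Relation.EqvGen.is_equivalence (SameBlock π)
  have hcomp : (genPart π).filter (fun V => y ∈ V) =
      {(π.sup id).filter (Relation.EqvGen (SameBlock π) y)} := by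
    refine eq_singleton_iff_unique_mem.2 ⟨mem_filter.2 ⟨mem_image_of_mem _ hy, ?_⟩, ?_⟩
    · exact mem_filter.2 ⟨hy, hequiv.refl y⟩
    · intro V hV
      obtain ⟨hVgen, hyV⟩ := mem_filter.1 hV
      obtain ⟨m, -, rfl⟩ := mem_image.1 hVgen
      have hmy := (mem_filter.1 hyV).2
      ext z
      simp only [mem_filter, and_congr_right_iff]
      exact fun _ => ⟨hequiv.trans (hequiv.symm hmy), hequiv.trans hmy⟩
  rw [blockOf, hcomp, sup_singleton, id, mem_filter]

noncomputable def relinkBlock (g : Finset (Finset ℕ)) (B : Finset ℕ) : Finset ℕ :=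
  if fmin B = fmin (blockOf g (fmin B)) then B
  else insert (fmax ((blockOf g (fmin B)).filter (· < fmin B))) B

lemma relinkBlock_of_singlyCovered (hπ : IsNCLOfSet F π) (hA : A ∈ π)
    (hs : SinglyCovered π (fmin A)) : relinkBlock (genPart π) A = A := by
  have hm : fmin A ∈ π.sup id := mem_sup_of_mem hA (fmin_mem (hπ.1.1 A hA))
  have hmin : fmin (blockOf (genPart π) (fmin A)) = fmin A := by
    refine fmin_eq_of_forall_le ((mem_blockOf_genPart hm).2 ⟨hm, .refl _⟩) fun z hz => ?_
    exact fmin_le_of_eqvGen hπ hA hs ((mem_blockOf_genPart hm).1 hz).2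
  rw [relinkBlock, if_pos hmin.symm]

lemma relinkBlock_erase_fmin (hπ : IsNCLOfSet F π) (hA : A ∈ π)
    (hs : ¬ SinglyCovered π (fmin A)) : relinkBlock (genPart π) (A.erase (fmin A)) = A := by
  have hmA : fmin A ∈ A := fmin_mem (hπ.1.1 A hA)
  have hne : (A.erase (fmin A)).Nonempty := by
    rw [← card_pos, card_erase_of_mem hmA]
    have := two_le_card_of_not_singlyCovered hπ.1 hA hmA hs
    omega
  set t := fmin (A.erase (fmin A))
  obtain ⟨htm, htA⟩ := mem_erase.1 (fmin_mem hne)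
  have hmt : fmin A < t := lt_of_le_of_ne (fmin_le htA) htm.symm
  have hgap : ∀ a ∈ A, a ∉ Set.Ioo (fmin A) t := fun a ha ⟨hma, hat⟩ =>
    absurd (fmin_le (mem_erase.2 ⟨hma.ne', ha⟩)) (not_le.2 hat)
  have ht : t ∈ π.sup id := mem_sup_of_mem hA htA
  have hrel_tm : Relation.EqvGen (SameBlock π) t (fmin A) := .rel _ _ ⟨A, hA, htA, hmA⟩
  have hmK : fmin A ∈ blockOf (genPart π) t :=
    (mem_blockOf_genPart ht).2 ⟨mem_sup_of_mem hA hmA, hrel_tm⟩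
  have hmin : t ≠ fmin (blockOf (genPart π) t) := by
    have := fmin_le hmK
    omega
  have hmax : fmax ((blockOf (genPart π) t).filter (· < t)) = fmin A := by
    refine fmax_eq_of_forall_le (mem_filter.2 ⟨hmK, hmt⟩) fun z hz => ?_
    obtain ⟨hzK, hzt⟩ := mem_filter.1 hz
    have hrel : Relation.EqvGen (SameBlock π) (fmin A) z :=
      (Relation.EqvGen.symm _ _ hrel_tm).trans _ _ _ ((mem_blockOf_genPart ht).1 hzK).2
    by_contra! hmz
    exact notMem_Ioo_of_eqvGen hπ hA htA hgap hrel ⟨hmz, hzt⟩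
  rw [relinkBlock, if_neg hmin, hmax, insert_erase hmA]

lemma image_relinkBlock_unlink (hπ : IsNCLOfSet F π) :
    (unlink π).image (relinkBlock (genPart π)) = π := by
  rw [unlink, image_image]
  refine (image_congr fun A hA => ?_).trans image_id
  by_cases hs : SinglyCovered π (fmin A)
  · simp only [Function.comp_apply, if_pos hs, id]
    exact relinkBlock_of_singlyCovered hπ hA hs
  · simp only [Function.comp_apply, if_neg hs, id]
    exact relinkBlock_erase_fmin hπ hA hs

end LinkedPartition

open LinkedPartition in
/-- Let `π, ρ ∈ NCL(n)` be such that `π̂ = ρ̂` and `π̌ = ρ̌`.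
Then `π = ρ`. -/
theorem stmt3 (n : ℕ) (π ρ : Finset (Finset ℕ)) (hπ : IsNCL n π) (hρ : IsNCL n ρ)
    (hgen : genPart π = genPart ρ) (hunl : unlink π = unlink ρ) :
    π = ρ := by
  calc π = (unlink π).image (relinkBlock (genPart π)) := (image_relinkBlock_unlink hπ).symm
    _ = (unlink ρ).image (relinkBlock (genPart ρ)) := by rw [hgen, hunl]
    _ = ρ := image_relinkBlock_unlink hρ
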